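/- Let X be a compact Hausdorff space, A a C(X)-algebra, F and G closed subsets of X with X = F ∪ G, and suppose b ∈ A|F and c ∈ A|G satisfy b|_{F∩G} = c|_{F∩G}. Then there exists a unique element a ∈ A|_{F∪G} = A with a|F = b and a|G = c. -/
import Mathlib

open scoped Topology

section Stmt16Aux

variable {X : Type*} [TopologicalSpace X] [CompactSpace X] [T2Space X]
variable {A : Type*} [CStarAlgebra A]

/-- Embedding of real-valued continuous functions into complex-valued ones. -/
noncomputable def Stmt16.cplx (r : C(X, ℝ)) : C(X, ℂ) :=
  ⟨fun x => (r x : ℂ), Complex.continuous_ofReal.comp r.continuous⟩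

namespace Stmt16

lemma cplx_apply (r : C(X, ℝ)) (x : X) : cplx r x = (r x : ℂ) := rfl

lemma norm_cplx_le_one {r : C(X, ℝ)} (hr : ∀ x, r x ∈ Set.Icc (0 : ℝ) 1) :
    ‖cplx r‖ ≤ 1 := by
  rw [ContinuousMap.norm_le _ zero_le_one]
  intro x
  rw [cplx_apply, Complex.norm_real, Real.norm_eq_abs, abs_le]
  exact ⟨by linarith [(hr x).1], (hr x).2⟩

lemma norm_one_sub_cplx_le_one {r : C(X, ℝ)} (hr : ∀ x, r x ∈ Set.Icc (0 : ℝ) 1) :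
    ‖(1 : C(X, ℂ)) - cplx r‖ ≤ 1 := by
  rw [ContinuousMap.norm_le _ zero_le_one]
  intro x
  have : ((1 : C(X, ℂ)) - cplx r) x = ((1 - r x : ℝ) : ℂ) := by
    simp [cplx_apply]
  rw [this, Complex.norm_real, Real.norm_eq_abs, abs_le]
  exact ⟨by linarith [(hr x).2], by linarith [(hr x).1]⟩

lemma comm_est (φ : C(X, ℂ) →⋆ₐ[ℂ] A) (u w : C(X, ℂ)) (x : A) :
    ‖φ (u * w) * x‖ ≤ ‖u‖ * ‖φ w * x‖ := by
  rw [map_mul, mul_assoc]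
  refine (norm_mul_le _ _).trans ?_
  exact mul_le_mul_of_nonneg_right (NonUnitalStarAlgHom.norm_apply_le φ u) (norm_nonneg _)

lemma one_sub_mul_eq (φ : C(X, ℂ) →⋆ₐ[ℂ] A) (w : C(X, ℂ)) (x : A) :
    φ (1 - w) * x = x - φ w * x := by
  rw [map_sub, map_one, sub_mul, one_mul]

/-- Key approximation lemma: every element of the ideal `I S` is approximately
supported "away from `S`". -/
lemma approx (φ : C(X, ℂ) →⋆ₐ[ℂ] A) {S : Set X} (hS : IsClosed S) {d : A}
    (hd : d ∈ closure (Submodule.span ℂ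
      {z : A | ∃ (f : C(X, ℂ)) (b : A), (∀ x ∈ S, f x = 0) ∧ z = φ f * b} : Set A))
    {ε : ℝ} (hε : 0 < ε) :
    ∃ h : C(X, ℂ), (∀ x ∈ S, h x = 0) ∧ ‖h‖ ≤ 1 ∧ ‖d - φ h * d‖ < ε := by
  have key : ∀ s ∈ Submodule.span ℂ
      {z : A | ∃ (f : C(X, ℂ)) (b : A), (∀ x ∈ S, f x = 0) ∧ z = φ f * b},
      ∀ δ : ℝ, 0 < δ → ∃ r : C(X, ℝ), (∀ x, r x ∈ Set.Icc (0 : ℝ) 1) ∧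
        (∀ x ∈ S, r x = 0) ∧ ‖s - φ (cplx r) * s‖ ≤ δ := by
    intro s hs
    induction hs using Submodule.span_induction with
    | mem z hz =>
      obtain ⟨f, a, hf, rfl⟩ := hz
      intro δ hδ
      set t : ℝ := δ / (1 + ‖a‖) with ht_def
      have ht : 0 < t := div_pos hδ (by positivity)
      have hK : IsClosed {x : X | t ≤ ‖f x‖} :=
        isClosed_le continuous_const (by fun_prop)
      have disj : Disjoint S {x : X | t ≤ ‖f x‖} := by
        rw [Set.disjoint_left]
        intro x hxS hxK
        simp only [Set.mem_setOf_eq, hf x hxS, norm_zero] at hxK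
        linarith
      obtain ⟨r, hr0, hr1, hr01⟩ := exists_continuous_zero_one_of_isClosed hS hK disj
      refine ⟨r, hr01, fun x hx => hr0 hx, ?_⟩
      have key_eq : φ f * a - φ (cplx r) * (φ f * a) = φ ((1 - cplx r) * f) * a := by
        rw [map_mul, one_sub_mul_eq φ, sub_mul, mul_assoc]
      rw [key_eq]
      have hnf : ‖(1 - cplx r) * f‖ ≤ t := by
        rw [ContinuousMap.norm_le _ ht.le]
        intro x
        by_cases hx : t ≤ ‖f x‖
        · have h1 : r x = 1 := hr1 hx
          have : ((1 - cplx r) * f) x = 0 := by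
            simp [cplx_apply, h1]
          simp [this, ht.le]
        · push_neg at hx
          have h1 : ‖((1 : C(X, ℂ)) - cplx r) x‖ ≤ 1 := by
            have : ((1 : C(X, ℂ)) - cplx r) x = ((1 - r x : ℝ) : ℂ) := by simp [cplx_apply]
            rw [this, Complex.norm_real, Real.norm_eq_abs, abs_le]
            exact ⟨by linarith [(hr01 x).2], by linarith [(hr01 x).1]⟩
          calc ‖((1 - cplx r) * f) x‖ = ‖((1 : C(X, ℂ)) - cplx r) x‖ * ‖f x‖ := by
                rw [ContinuousMap.mul_apply, norm_mul]
            _ ≤ 1 * t := mul_le_mul h1 hx.le (norm_nonneg _) zero_le_one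
            _ = t := one_mul t
      calc ‖φ ((1 - cplx r) * f) * a‖ ≤ ‖φ ((1 - cplx r) * f)‖ * ‖a‖ := norm_mul_le _ _
        _ ≤ ‖(1 - cplx r) * f‖ * ‖a‖ :=
            mul_le_mul_of_nonneg_right (NonUnitalStarAlgHom.norm_apply_le φ _) (norm_nonneg a)
        _ ≤ t * ‖a‖ := mul_le_mul_of_nonneg_right hnf (norm_nonneg a)
        _ ≤ t * (1 + ‖a‖) := by
            refine mul_le_mul_of_nonneg_left ?_ ht.le
            linarith [norm_nonneg a]
        _ = δ := div_mul_cancel₀ δ (by positivity)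
    | zero =>
      intro δ hδ
      refine ⟨0, fun x => by norm_num, fun x _ => rfl, ?_⟩
      have : cplx (0 : C(X, ℝ)) = 0 := by ext x; simp [cplx_apply]
      simp [this, hδ.le]
    | add x y hx hy ihx ihy =>
      intro δ hδ
      obtain ⟨r₁, h01₁, hS₁, he₁⟩ := ihx (δ / 2) (by positivity)
      obtain ⟨r₂, h01₂, hS₂, he₂⟩ := ihy (δ / 2) (by positivity)
      refine ⟨r₁ + r₂ - r₁ * r₂, ?_, ?_, ?_⟩
      · intro x
        have a1 := (h01₁ x).1; have a2 := (h01₁ x).2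
        have b1 := (h01₂ x).1; have b2 := (h01₂ x).2
        simp only [ContinuousMap.sub_apply, ContinuousMap.add_apply, ContinuousMap.mul_apply,
          Set.mem_Icc]
        constructor <;> nlinarith
      · intro x hx
        simp [hS₁ x hx, hS₂ x hx]
      · have hcr : (1 : C(X, ℂ)) - cplx (r₁ + r₂ - r₁ * r₂)
            = (1 - cplx r₁) * (1 - cplx r₂) := by
          ext x
          simp only [ContinuousMap.sub_apply, ContinuousMap.one_apply,
            ContinuousMap.mul_apply, cplx_apply, ContinuousMap.add_apply]
          push_cast
          ring
        have expand : x + y - φ (cplx (r₁ + r₂ - r₁ * r₂)) * (x + y)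
            = φ ((1 - cplx r₂) * (1 - cplx r₁)) * x + φ ((1 - cplx r₁) * (1 - cplx r₂)) * y := by
          rw [← one_sub_mul_eq φ, hcr, mul_add, mul_comm (1 - cplx r₁) (1 - cplx r₂)]
        rw [expand]
        have e1 : ‖φ ((1 - cplx r₂) * (1 - cplx r₁)) * x‖ ≤ δ / 2 := by
          refine (comm_est φ _ _ x).trans ?_
          rw [one_sub_mul_eq φ]
          calc ‖(1 : C(X,ℂ)) - cplx r₂‖ * ‖x - φ (cplx r₁) * x‖ ≤ 1 * (δ / 2) :=
                mul_le_mul (norm_one_sub_cplx_le_one h01₂) he₁ (norm_nonneg _) zero_le_one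
            _ = δ / 2 := one_mul _
        have e2 : ‖φ ((1 - cplx r₁) * (1 - cplx r₂)) * y‖ ≤ δ / 2 := by
          refine (comm_est φ _ _ y).trans ?_
          rw [one_sub_mul_eq φ]
          calc ‖(1 : C(X,ℂ)) - cplx r₁‖ * ‖y - φ (cplx r₂) * y‖ ≤ 1 * (δ / 2) :=
                mul_le_mul (norm_one_sub_cplx_le_one h01₁) he₂ (norm_nonneg _) zero_le_one
            _ = δ / 2 := one_mul _
        calc ‖_ + _‖ ≤ _ := norm_add_le _ _
          _ ≤ δ / 2 + δ / 2 := add_le_add e1 e2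
          _ = δ := by ring
    | smul c x hx ih =>
      intro δ hδ
      obtain ⟨r, h01, hSr, he⟩ := ih (δ / (1 + ‖c‖)) (by positivity)
      refine ⟨r, h01, hSr, ?_⟩
      have : c • x - φ (cplx r) * (c • x) = c • (x - φ (cplx r) * x) := by
        rw [mul_smul_comm, smul_sub]
      rw [this, norm_smul]
      calc ‖c‖ * ‖x - φ (cplx r) * x‖ ≤ ‖c‖ * (δ / (1 + ‖c‖)) :=
            mul_le_mul_of_nonneg_left he (norm_nonneg c)
        _ ≤ (1 + ‖c‖) * (δ / (1 + ‖c‖)) := by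
            refine mul_le_mul_of_nonneg_right ?_ (by positivity)
            linarith [norm_nonneg c]
        _ = δ := mul_div_cancel₀ δ (by positivity)
  obtain ⟨s, hs_mem, hds⟩ := Metric.mem_closure_iff.mp hd (ε / 3) (by positivity)
  obtain ⟨r, h01, hSr, he⟩ := key s hs_mem (ε / 3) (by positivity)
  refine ⟨cplx r, fun x hx => by simp [cplx_apply, hSr x hx], norm_cplx_le_one h01, ?_⟩
  have hsplit : d - φ (cplx r) * d
      = (d - s) + (s - φ (cplx r) * s) + φ (cplx r) * (s - d) := by
    rw [mul_sub]; abel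
  rw [hsplit]
  have h1 : ‖d - s‖ < ε / 3 := by rwa [← dist_eq_norm]
  have h3 : ‖φ (cplx r) * (s - d)‖ < ε / 3 := by
    calc ‖φ (cplx r) * (s - d)‖ ≤ ‖φ (cplx r)‖ * ‖s - d‖ := norm_mul_le _ _
      _ ≤ 1 * ‖s - d‖ := by
          refine mul_le_mul_of_nonneg_right ?_ (norm_nonneg _)
          exact (NonUnitalStarAlgHom.norm_apply_le φ _).trans (norm_cplx_le_one h01)
      _ = ‖d - s‖ := by rw [one_mul, norm_sub_rev]
      _ < ε / 3 := h1
  calc ‖(d - s) + (s - φ (cplx r) * s) + φ (cplx r) * (s - d)‖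
      ≤ ‖(d - s) + (s - φ (cplx r) * s)‖ + ‖φ (cplx r) * (s - d)‖ := norm_add_le _ _
    _ ≤ ‖d - s‖ + ‖s - φ (cplx r) * s‖ + ‖φ (cplx r) * (s - d)‖ := by
        gcongr; exact norm_add_le _ _
    _ < ε / 3 + ε / 3 + ε / 3 := by
        have := he
        linarith
    _ = ε := by ring

end Stmt16

end Stmt16Aux

/-- Gluing property of `C(X)`-algebras over a closed cover. Let `A` be a
`C(X)`-algebra via a central unital *-homomorphism `φ : C(X) → A`, and for a closed
set `S ⊆ X` let `I S = closure(span(C₀(X∖S)·A))` be the ideal whose quotient is the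
restriction `A|_S`. If `X = F ∪ G` with `F, G` closed and `b, c ∈ A` have the same
image in `A|_{F∩G}` (i.e. `b − c ∈ I (F ∩ G)`), then there is a unique `a ∈ A`
(`= A|_{F∪G}`) with `a|_F = b|_F` and `a|_G = c|_G` (i.e. `a − b ∈ I F` and
`a − c ∈ I G`). -/
theorem stmt16 {X : Type*} [TopologicalSpace X] [CompactSpace X] [T2Space X]
    {A : Type*} [CStarAlgebra A]
    (φ : C(X, ℂ) →⋆ₐ[ℂ] A) (hcentral : ∀ (f : C(X, ℂ)) (b : A), φ f * b = b * φ f)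
    (I : Set X → Set A)
    (hI : ∀ S : Set X, I S = closure
      (Submodule.span ℂ {z : A | ∃ (f : C(X, ℂ)) (b : A), (∀ x ∈ S, f x = 0) ∧ z = φ f * b} : Set A))
    (F G : Set X) (hF : IsClosed F) (hG : IsClosed G) (hFG : F ∪ G = Set.univ)
    (b c : A) (hbc : b - c ∈ I (F ∩ G)) :
    ∃! a : A, a - b ∈ I F ∧ a - c ∈ I G := by
  classical
  -- the ideals as (topologically closed) submodules
  set K : Set X → Submodule ℂ A := fun S =>
    (Submodule.span ℂ
      {z : A | ∃ (f : C(X, ℂ)) (b : A), (∀ x ∈ S, f x = 0) ∧ z = φ f * b}).topologicalClosure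
    with hK_def
  have hKset : ∀ S : Set X, (K S : Set A) = closure (Submodule.span ℂ
      {z : A | ∃ (f : C(X, ℂ)) (b : A), (∀ x ∈ S, f x = 0) ∧ z = φ f * b} : Set A) := by
    intro S
    rw [hK_def]
    exact Submodule.topologicalClosure_coe _
  have hIK : ∀ S : Set X, I S = ↑(K S) := fun S => (hI S).trans (hKset S).symm
  have hKclosed : ∀ S : Set X, IsClosed (K S : Set A) := fun S => by
    rw [hKset S]; exact isClosed_closure
  have hFG' : IsClosed (F ∩ G) := hF.inter hG
  -- approximation lemma, restated for `K`
  have approx' : ∀ (S : Set X), IsClosed S → ∀ d, d ∈ K S → ∀ ε : ℝ, 0 < ε →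
      ∃ h : C(X, ℂ), (∀ x ∈ S, h x = 0) ∧ ‖h‖ ≤ 1 ∧ ‖d - φ h * d‖ < ε := by
    intro S hS d hd ε hε
    have hd' : d ∈ (K S : Set A) := hd
    rw [hKset S] at hd'
    exact Stmt16.approx φ hS hd' hε
  -- generators belong to the ideal
  have hgen : ∀ (S : Set X) (f : C(X, ℂ)) (x : A), (∀ y ∈ S, f y = 0) → φ f * x ∈ K S := by
    intro S f x hf
    exact Submodule.le_topologicalClosure _ (Submodule.subset_span ⟨f, x, hf, rfl⟩)
  -- the splitting step
  have step : ∀ (n : ℕ) (x : {y : A // y ∈ K (F ∩ G)}),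
      ∃ p : A × A × {y : A // y ∈ K (F ∩ G)}, p.1 ∈ K F ∧ p.2.1 ∈ K G ∧
        (x : A) = p.1 + p.2.1 + (p.2.2 : A) ∧ ‖(p.2.2 : A)‖ ≤ (1 / 2 : ℝ) ^ n ∧
        ‖p.1‖ ≤ ‖(x : A)‖ ∧ ‖p.2.1‖ ≤ 2 * ‖(x : A)‖ := by
    intro n x
    obtain ⟨h, hhS, hh1, hhd⟩ := approx' (F ∩ G) hFG' (x : A) x.2 ((1 / 2 : ℝ) ^ n)
      (by positivity)
    -- split h = f + (h - f) using the closed cover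
    have hfrontier : ∀ y ∈ frontier F, (0 : X → ℂ) y = h y := by
      intro y hy
      have hyF : y ∈ F := hF.closure_eq ▸ hy.1
      have hyG : y ∈ G := by
        by_contra hyG
        have hopen : Gᶜ ⊆ interior F := by
          apply interior_maximal _ hG.isOpen_compl
          intro z hz
          rcases (hFG ▸ Set.mem_univ z : z ∈ F ∪ G) with h' | h'
          · exact h'
          · exact absurd h' hz
        exact hy.2 (hopen hyG)
      exact (hhS y ⟨hyF, hyG⟩).symm
    set f : C(X, ℂ) := ⟨F.piecewise 0 h, Continuous.piecewise hfrontier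
      continuous_const h.continuous⟩ with hf_def
    have hfF : ∀ y ∈ F, f y = 0 := fun y hy => Set.piecewise_eq_of_mem _ _ _ hy
    have hfval : ∀ y, f y = 0 ∨ f y = h y := by
      intro y
      by_cases hy : y ∈ F
      · exact Or.inl (Set.piecewise_eq_of_mem _ _ _ hy)
      · exact Or.inr (Set.piecewise_eq_of_notMem _ _ _ hy)
    have hgG : ∀ y ∈ G, (h - f) y = 0 := by
      intro y hy
      by_cases hyF : y ∈ F
      · have h1 : f y = 0 := hfF y hyF
        have h2 : h y = 0 := hhS y ⟨hyF, hy⟩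
        simp [h1, h2]
      · have h1 : f y = h y := Set.piecewise_eq_of_notMem _ _ _ hyF
        simp [h1]
    have hfn : ‖f‖ ≤ 1 := by
      rw [ContinuousMap.norm_le _ zero_le_one]
      intro y
      rcases hfval y with h' | h'
      · simp [h']
      · rw [h']
        exact (ContinuousMap.norm_coe_le_norm h y).trans hh1
    have hgn : ‖h - f‖ ≤ 2 := by
      calc ‖h - f‖ ≤ ‖h‖ + ‖f‖ := norm_sub_le _ _
        _ ≤ 1 + 1 := add_le_add hh1 hfn
        _ = 2 := by norm_num
    have hmem : (x : A) - φ h * (x : A) ∈ K (F ∩ G) :=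
      Submodule.sub_mem _ x.2 (hgen _ _ _ hhS)
    refine ⟨⟨φ f * (x : A), φ (h - f) * (x : A), ⟨(x : A) - φ h * (x : A), hmem⟩⟩,
      hgen F f _ hfF, hgen G (h - f) _ hgG, ?_, hhd.le, ?_, ?_⟩
    · simp only
      rw [map_sub, sub_mul]
      abel
    · calc ‖φ f * (x : A)‖ ≤ ‖φ f‖ * ‖(x : A)‖ := norm_mul_le _ _
        _ ≤ 1 * ‖(x : A)‖ := mul_le_mul_of_nonneg_right
            ((NonUnitalStarAlgHom.norm_apply_le φ f).trans hfn) (norm_nonneg _)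
        _ = ‖(x : A)‖ := one_mul _
    · calc ‖φ (h - f) * (x : A)‖ ≤ ‖φ (h - f)‖ * ‖(x : A)‖ := norm_mul_le _ _
        _ ≤ 2 * ‖(x : A)‖ := mul_le_mul_of_nonneg_right
            ((NonUnitalStarAlgHom.norm_apply_le φ (h - f)).trans hgn) (norm_nonneg _)
  choose Ψ hΨF hΨG hΨeq hΨnorm hΨu hΨv using step
  have hd0 : b - c ∈ K (F ∩ G) := by rw [hIK] at hbc; exact hbc
  set seq : ℕ → {y : A // y ∈ K (F ∩ G)} := fun n =>
    Nat.rec ⟨b - c, hd0⟩ (fun n x => (Ψ n x).2.2) n with hseq_def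
  set U : ℕ → A := fun n => (Ψ n (seq n)).1 with hU_def
  set V : ℕ → A := fun n => (Ψ n (seq n)).2.1 with hV_def
  have hUF : ∀ n, U n ∈ K F := fun n => hΨF n (seq n)
  have hVG : ∀ n, V n ∈ K G := fun n => hΨG n (seq n)
  have hrec : ∀ n, (seq n : A) = U n + V n + (seq (n + 1) : A) := fun n => hΨeq n (seq n)
  have hseqnorm : ∀ n, ‖(seq (n + 1) : A)‖ ≤ (1 / 2 : ℝ) ^ n := fun n => hΨnorm n (seq n)
  set C : ℝ := ‖b - c‖ + 2 with hC_def
  have hC2 : (2 : ℝ) ≤ C := by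
    have := norm_nonneg (b - c); rw [hC_def]; linarith
  have hbound : ∀ n, ‖(seq n : A)‖ ≤ C * (1 / 2 : ℝ) ^ n := by
    intro n
    cases n with
    | zero =>
      simp only [pow_zero, mul_one]
      have h0 : (seq 0 : A) = b - c := rfl
      rw [h0, hC_def]; linarith
    | succ n =>
      calc ‖(seq (n + 1) : A)‖ ≤ (1 / 2 : ℝ) ^ n := hseqnorm n
        _ = 2 * (1 / 2 : ℝ) ^ (n + 1) := by ring
        _ ≤ C * (1 / 2 : ℝ) ^ (n + 1) :=
            mul_le_mul_of_nonneg_right hC2 (by positivity)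
  have hUbound : ∀ n, ‖U n‖ ≤ C * (1 / 2 : ℝ) ^ n :=
    fun n => (hΨu n (seq n)).trans (hbound n)
  have hVbound : ∀ n, ‖V n‖ ≤ 2 * C * (1 / 2 : ℝ) ^ n := by
    intro n
    calc ‖V n‖ ≤ 2 * ‖(seq n : A)‖ := hΨv n (seq n)
      _ ≤ 2 * (C * (1 / 2 : ℝ) ^ n) := by have := hbound n; linarith
      _ = 2 * C * (1 / 2 : ℝ) ^ n := by ring
  -- partial sums
  set su : ℕ → A := fun n => ∑ k ∈ Finset.range n, U k with hsu_def
  set sv : ℕ → A := fun n => ∑ k ∈ Finset.range n, V k with hsv_def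
  have hsu_succ : ∀ n, su (n + 1) = su n + U n := by
    intro n; rw [hsu_def]; exact Finset.sum_range_succ _ _
  have hsv_succ : ∀ n, sv (n + 1) = sv n + V n := by
    intro n; rw [hsv_def]; exact Finset.sum_range_succ _ _
  have hcau_u : CauchySeq su := by
    apply cauchySeq_of_le_geometric (1 / 2 : ℝ) C (by norm_num)
    intro n
    rw [dist_eq_norm, hsu_succ n, norm_sub_rev, add_sub_cancel_left]
    exact hUbound n
  have hcau_v : CauchySeq sv := by
    apply cauchySeq_of_le_geometric (1 / 2 : ℝ) (2 * C) (by norm_num)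
    intro n
    rw [dist_eq_norm, hsv_succ n, norm_sub_rev, add_sub_cancel_left]
    exact hVbound n
  obtain ⟨u, hu_t⟩ := cauchySeq_tendsto_of_complete hcau_u
  obtain ⟨v, hv_t⟩ := cauchySeq_tendsto_of_complete hcau_v
  have hUmem : u ∈ K F := by
    refine (hKclosed F).mem_of_tendsto hu_t (Filter.Eventually.of_forall fun n => ?_)
    exact Submodule.sum_mem _ fun k _ => hUF k
  have hVmem : v ∈ K G := by
    refine (hKclosed G).mem_of_tendsto hv_t (Filter.Eventually.of_forall fun n => ?_)
    exact Submodule.sum_mem _ fun k _ => hVG k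
  have htel : ∀ n, su n + sv n = (b - c) - (seq n : A) := by
    intro n
    induction n with
    | zero =>
      have h0 : (seq 0 : A) = b - c := rfl
      have h1 : su 0 = 0 := by rw [hsu_def]; simp
      have h2 : sv 0 = 0 := by rw [hsv_def]; simp
      rw [h0, h1, h2]; abel
    | succ n ih =>
      have h4 : (seq (n + 1) : A) = (seq n : A) - U n - V n := by
        rw [hrec n]; abel
      rw [hsu_succ n, hsv_succ n, h4]
      calc su n + U n + (sv n + V n) = (su n + sv n) + U n + V n := by abel
        _ = ((b - c) - (seq n : A)) + U n + V n := by rw [ih]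
        _ = (b - c) - ((seq n : A) - U n - V n) := by abel
  have hseq_to_zero : Filter.Tendsto (fun n => (seq n : A)) Filter.atTop (nhds 0) := by
    apply squeeze_zero_norm hbound
    have h5 : Filter.Tendsto (fun n : ℕ => C * (1 / 2 : ℝ) ^ n) Filter.atTop (nhds (C * 0)) :=
      (tendsto_pow_atTop_nhds_zero_of_lt_one (by norm_num) (by norm_num)).const_mul C
    simpa using h5
  have hsum_t : Filter.Tendsto (fun n => su n + sv n) Filter.atTop (nhds (u + v)) :=
    hu_t.add hv_t
  have hsum_t' : Filter.Tendsto (fun n => su n + sv n) Filter.atTop (nhds (b - c)) := by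
    have heq : (fun n => su n + sv n) = fun n => (b - c) - (seq n : A) := funext htel
    rw [heq]
    simpa using (tendsto_const_nhds (x := b - c) (f := Filter.atTop (α := ℕ))).sub hseq_to_zero
  have huv : u + v = b - c := tendsto_nhds_unique hsum_t hsum_t'
  -- the desired element
  have ha1 : (b - u) - b ∈ K F := by
    have heq : (b - u) - b = -u := by abel
    rw [heq]
    exact Submodule.neg_mem _ hUmem
  have ha2 : (b - u) - c ∈ K G := by
    have heq : (b - u) - c = v := by
      have huv' : b - c = u + v := huv.symm
      calc (b - u) - c = (b - c) - u := by abel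
        _ = (u + v) - u := by rw [huv']
        _ = v := by abel
    rw [heq]
    exact hVmem
  -- uniqueness auxiliary: an element of both ideals is zero
  have hzero : ∀ e : A, e ∈ K F → e ∈ K G → e = 0 := by
    intro e heF heG
    have hnorm : ∀ ε : ℝ, 0 < ε → ‖e‖ ≤ 2 * ε := by
      intro ε hε
      obtain ⟨h₁, hh₁S, hh₁1, hh₁d⟩ := approx' F hF e heF ε hε
      obtain ⟨h₂, hh₂S, hh₂1, hh₂d⟩ := approx' G hG e heG ε hε
      have hprod : h₁ * h₂ = 0 := by
        ext y
        rcases (hFG ▸ Set.mem_univ y : y ∈ F ∪ G) with h' | h'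
        · simp [hh₁S y h']
        · simp [hh₂S y h']
      have hdecomp : e = (e - φ h₁ * e) + φ h₁ * (e - φ h₂ * e) + φ h₁ * (φ h₂ * e) := by
        rw [mul_sub]; abel
      have hthird : φ h₁ * (φ h₂ * e) = 0 := by
        rw [← mul_assoc, ← map_mul, hprod, map_zero, zero_mul]
      have hsecond : ‖φ h₁ * (e - φ h₂ * e)‖ ≤ ε := by
        calc ‖φ h₁ * (e - φ h₂ * e)‖ ≤ ‖φ h₁‖ * ‖e - φ h₂ * e‖ := norm_mul_le _ _
          _ ≤ 1 * ε := mul_le_mul ((NonUnitalStarAlgHom.norm_apply_le φ h₁).trans hh₁1)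
              hh₂d.le (norm_nonneg _) zero_le_one
          _ = ε := one_mul ε
      calc ‖e‖ = ‖(e - φ h₁ * e) + φ h₁ * (e - φ h₂ * e) + φ h₁ * (φ h₂ * e)‖ := by
            rw [← hdecomp]
        _ ≤ ‖(e - φ h₁ * e) + φ h₁ * (e - φ h₂ * e)‖ + ‖φ h₁ * (φ h₂ * e)‖ := norm_add_le _ _
        _ ≤ ‖e - φ h₁ * e‖ + ‖φ h₁ * (e - φ h₂ * e)‖ + ‖φ h₁ * (φ h₂ * e)‖ := by
            gcongr
            exact norm_add_le _ _
        _ ≤ ε + ε + 0 := by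
            rw [hthird, norm_zero]
            exact add_le_add (add_le_add hh₁d.le hsecond) le_rfl
        _ = 2 * ε := by ring
    by_contra hne
    have hpos : 0 < ‖e‖ := norm_pos_iff.mpr hne
    have := hnorm (‖e‖ / 4) (by positivity)
    linarith
  refine ⟨b - u, ⟨by rw [hIK]; exact ha1, by rw [hIK]; exact ha2⟩, ?_⟩
  intro y hy
  obtain ⟨hy1, hy2⟩ := hy
  rw [hIK] at hy1 hy2
  have heF : y - (b - u) ∈ K F := by
    have heq : y - (b - u) = (y - b) - ((b - u) - b) := by abel
    rw [heq]
    exact Submodule.sub_mem _ hy1 ha1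
  have heG : y - (b - u) ∈ K G := by
    have heq : y - (b - u) = (y - c) - ((b - u) - c) := by abel
    rw [heq]
    exact Submodule.sub_mem _ hy2 ha2
  have := hzero _ heF heG
  exact sub_eq_zero.mp this
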